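/- arXiv:1510.04894 — 2 statements merged into one kernel-verified Lean document; each statement's English description precedes it below -/
import Mathlib

section
/- Fix an integer n ≥ 2. (a) Every lattice point p of the cone generated by (1,0,0), (0,1,0), (2, 2n−2, 2n−1) satisfying p₁ + p₂ − p₃ = 1 is irreducible in that cone. (b) Every lattice point p of the cone generated by (0,0,1), (2,0,1), (2, 2n−2, 2n−1) satisfying p₃ − p₂ = 1 is irreducible in that cone. In particular the weight vectors Uᵢ = (1,i,i) are irreducible in the first cone, and the weight vectors Wᵢ = (1,i,i+1) and Vᵢ = (2,i,i+1) are irreducible in the second cone. -/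
/-- Coercion of an integer lattice point of `ℤ³` into `ℝ³`. -/
def toR (p : ℤ × ℤ × ℤ) : ℝ × ℝ × ℝ := ((p.1 : ℝ), (p.2.1 : ℝ), (p.2.2 : ℝ))

/-- The cone generated by three vectors in `ℝ³`. -/
def cone3 (v₁ v₂ v₃ : ℝ × ℝ × ℝ) : Set (ℝ × ℝ × ℝ) :=
  {p | ∃ a b c : ℝ, 0 ≤ a ∧ 0 ≤ b ∧ 0 ≤ c ∧ p = a • v₁ + b • v₂ + c • v₃}

/-- A lattice point `p` is irreducible in the cone `σ` if it cannot be written as the sum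
of two nonzero lattice points of `σ`. -/
def IrredIn (σ : Set (ℝ × ℝ × ℝ)) (p : ℤ × ℤ × ℤ) : Prop :=
  ∀ n₁ n₂ : ℤ × ℤ × ℤ, toR n₁ ∈ σ → toR n₂ ∈ σ → p = n₁ + n₂ → n₁ = 0 ∨ n₂ = 0

/-- The cone generated by `(1,0,0)`, `(0,1,0)`, `(2,2n-2,2n-1)`. -/
def sigmaA (n : ℤ) : Set (ℝ × ℝ × ℝ) :=
  cone3 (toR (1, 0, 0)) (toR (0, 1, 0)) (toR (2, 2 * n - 2, 2 * n - 1))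

/-- The cone generated by `(0,0,1)`, `(2,0,1)`, `(2,2n-2,2n-1)`. -/
def sigmaB (n : ℤ) : Set (ℝ × ℝ × ℝ) :=
  cone3 (toR (0, 0, 1)) (toR (2, 0, 1)) (toR (2, 2 * n - 2, 2 * n - 1))

/-- On `sigmaA`, the linear functional `p₁ + p₂ − p₃` is nonnegative and vanishes
only at the origin. -/
lemma keyA (n : ℤ) (p : ℤ × ℤ × ℤ) (h : toR p ∈ sigmaA n) :
    0 ≤ p.1 + p.2.1 - p.2.2 ∧ (p.1 + p.2.1 - p.2.2 = 0 → p = 0) := by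
  obtain ⟨a, b, c, ha, hb, hc, heq⟩ := h
  simp only [sigmaA, cone3, toR, Prod.mk_add_mk, Prod.smul_mk, smul_eq_mul, Prod.mk.injEq] at heq
  obtain ⟨h1, h2, h3⟩ := heq
  push_cast at h1 h2 h3
  have hsum : ((p.1 + p.2.1 - p.2.2 : ℤ) : ℝ) = a + b + c := by push_cast; nlinarith
  constructor
  · have : (0:ℝ) ≤ ((p.1 + p.2.1 - p.2.2 : ℤ) : ℝ) := by rw [hsum]; linarith
    exact_mod_cast this
  · intro h0
    rw [h0] at hsum; norm_num at hsum
    have ha0 : a = 0 := by linarith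
    have hb0 : b = 0 := by linarith
    have hc0 : c = 0 := by linarith
    have e1 : (p.1 : ℝ) = 0 := by rw [h1, ha0, hc0]; ring
    have e2 : (p.2.1 : ℝ) = 0 := by rw [h2, hb0, hc0]; ring
    have e3 : (p.2.2 : ℝ) = 0 := by rw [h3, hc0]; ring
    have f1 : p.1 = 0 := by exact_mod_cast e1
    have f2 : p.2.1 = 0 := by exact_mod_cast e2
    have f3 : p.2.2 = 0 := by exact_mod_cast e3
    exact Prod.ext f1 (Prod.ext f2 f3)

/-- On `sigmaB`, the linear functional `p₃ − p₂` is nonnegative and vanishes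
only at the origin. -/
lemma keyB (n : ℤ) (p : ℤ × ℤ × ℤ) (h : toR p ∈ sigmaB n) :
    0 ≤ p.2.2 - p.2.1 ∧ (p.2.2 - p.2.1 = 0 → p = 0) := by
  obtain ⟨a, b, c, ha, hb, hc, heq⟩ := h
  simp only [sigmaB, cone3, toR, Prod.mk_add_mk, Prod.smul_mk, smul_eq_mul, Prod.mk.injEq] at heq
  obtain ⟨h1, h2, h3⟩ := heq
  push_cast at h1 h2 h3
  have hsum : ((p.2.2 - p.2.1 : ℤ) : ℝ) = a + b + c := by push_cast; nlinarith
  constructor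
  · have : (0:ℝ) ≤ ((p.2.2 - p.2.1 : ℤ) : ℝ) := by rw [hsum]; linarith
    exact_mod_cast this
  · intro h0
    rw [h0] at hsum; norm_num at hsum
    have ha0 : a = 0 := by linarith
    have hb0 : b = 0 := by linarith
    have hc0 : c = 0 := by linarith
    have e1 : (p.1 : ℝ) = 0 := by rw [h1, hb0, hc0]; ring
    have e2 : (p.2.1 : ℝ) = 0 := by rw [h2, hc0]; ring
    have e3 : (p.2.2 : ℝ) = 0 := by rw [h3, ha0, hb0, hc0]; ring
    have f1 : p.1 = 0 := by exact_mod_cast e1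
    have f2 : p.2.1 = 0 := by exact_mod_cast e2
    have f3 : p.2.2 = 0 := by exact_mod_cast e3
    exact Prod.ext f1 (Prod.ext f2 f3)

/-- Any lattice point with `p₁ + p₂ − p₃ = 1` is irreducible in `sigmaA`. -/
lemma irredA (n : ℤ) (p : ℤ × ℤ × ℤ) (hp : p.1 + p.2.1 - p.2.2 = 1) :
    IrredIn (sigmaA n) p := by
  intro n₁ n₂ h₁ h₂ hsum
  obtain ⟨g₁, z₁⟩ := keyA n n₁ h₁
  obtain ⟨g₂, z₂⟩ := keyA n n₂ h₂
  have hadd : p.1 = n₁.1 + n₂.1 ∧ p.2.1 = n₁.2.1 + n₂.2.1 ∧ p.2.2 = n₁.2.2 + n₂.2.2 := by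
    rw [hsum]; exact ⟨rfl, rfl, rfl⟩
  obtain ⟨e1, e2, e3⟩ := hadd
  rcases (by omega : n₁.1 + n₁.2.1 - n₁.2.2 = 0 ∨ n₂.1 + n₂.2.1 - n₂.2.2 = 0) with h | h
  · exact Or.inl (z₁ h)
  · exact Or.inr (z₂ h)

/-- Any lattice point with `p₃ − p₂ = 1` is irreducible in `sigmaB`. -/
lemma irredB (n : ℤ) (p : ℤ × ℤ × ℤ) (hp : p.2.2 - p.2.1 = 1) :
    IrredIn (sigmaB n) p := by
  intro n₁ n₂ h₁ h₂ hsum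
  obtain ⟨g₁, z₁⟩ := keyB n n₁ h₁
  obtain ⟨g₂, z₂⟩ := keyB n n₂ h₂
  have hadd : p.2.1 = n₁.2.1 + n₂.2.1 ∧ p.2.2 = n₁.2.2 + n₂.2.2 := by
    rw [hsum]; exact ⟨rfl, rfl⟩
  obtain ⟨e2, e3⟩ := hadd
  rcases (by omega : n₁.2.2 - n₁.2.1 = 0 ∨ n₂.2.2 - n₂.2.1 = 0) with h | h
  · exact Or.inl (z₁ h)
  · exact Or.inr (z₂ h)

theorem D2n_weight_vectors_irreducible (n : ℤ) (hn : 2 ≤ n) :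
    (∀ p : ℤ × ℤ × ℤ, toR p ∈ sigmaA n → p.1 + p.2.1 - p.2.2 = 1 → IrredIn (sigmaA n) p) ∧
    (∀ p : ℤ × ℤ × ℤ, toR p ∈ sigmaB n → p.2.2 - p.2.1 = 1 → IrredIn (sigmaB n) p) ∧
    (∀ i : ℤ, 1 ≤ i → i ≤ n - 1 → IrredIn (sigmaA n) (1, i, i)) ∧
    (∀ i : ℤ, 0 ≤ i → i ≤ n - 1 → IrredIn (sigmaB n) (1, i, i + 1)) ∧
    (∀ i : ℤ, 0 ≤ i → i ≤ 2 * n - 2 → IrredIn (sigmaB n) (2, i, i + 1)) := by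
  refine ⟨fun p _ hp => irredA n p hp, fun p _ hp => irredB n p hp,
    fun i _ _ => irredA n (1, i, i) (by ring),
    fun i _ _ => irredB n (1, i, i + 1) (by ring),
    fun i _ _ => irredB n (2, i, i + 1) (by ring)⟩
end

section
/- Let σ ⊂ ℝ³ be the cone generated by (1,0,0), (0,1,0), (3,4,6). Then each of the lattice points (1,1,1), (1,2,2), (2,2,3), (2,3,4), (3,4,6) of σ is irreducible in σ: none of them can be written as the sum of two nonzero elements of σ ∩ ℤ³. -/
/-- The first maximal cone of the Newton dual fan of the `E₆` singularity. -/
def sigmaE6 : Set (ℝ × ℝ × ℝ) := cone3 (toR (1, 0, 0)) (toR (0, 1, 0)) (toR (3, 4, 6))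

lemma mem_sigmaE6_iff (x y z : ℤ) :
    toR (x, y, z) ∈ sigmaE6 ↔ 0 ≤ z ∧ z ≤ 2 * x ∧ 2 * z ≤ 3 * y := by
  constructor
  · rintro ⟨a, b, c, ha, hb, hc, h⟩
    simp only [toR, Prod.ext_iff, Prod.smul_mk, Prod.mk_add_mk, smul_eq_mul] at h
    obtain ⟨h1, h2, h3⟩ := h
    push_cast at h1 h2 h3
    refine ⟨?_, ?_, ?_⟩
    · have : (0 : ℝ) ≤ (z : ℝ) := by rw [h3]; positivity
      exact_mod_cast this
    · have : (z : ℝ) ≤ 2 * (x : ℝ) := by rw [h3, h1]; nlinarith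
      exact_mod_cast this
    · have : 2 * (z : ℝ) ≤ 3 * (y : ℝ) := by rw [h3, h2]; nlinarith
      exact_mod_cast this
  · rintro ⟨h1, h2, h3⟩
    refine ⟨(x : ℝ) - (z : ℝ) / 2, (y : ℝ) - 2 * (z : ℝ) / 3, (z : ℝ) / 6, ?_, ?_, ?_, ?_⟩
    · have : (z : ℝ) ≤ 2 * (x : ℝ) := by exact_mod_cast h2
      linarith
    · have : 2 * (z : ℝ) ≤ 3 * (y : ℝ) := by exact_mod_cast h3
      linarith
    · have : (0 : ℝ) ≤ (z : ℝ) := by exact_mod_cast h1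
      linarith
    · simp only [toR, Prod.ext_iff, Prod.smul_mk, Prod.mk_add_mk, smul_eq_mul]
      norm_num
      constructor <;> ring

lemma irred_aux (px py pz : ℤ)
    (h : ∀ x1 y1 z1 x2 y2 z2 : ℤ,
      (0 ≤ z1 ∧ z1 ≤ 2 * x1 ∧ 2 * z1 ≤ 3 * y1) →
      (0 ≤ z2 ∧ z2 ≤ 2 * x2 ∧ 2 * z2 ≤ 3 * y2) →
      px = x1 + x2 → py = y1 + y2 → pz = z1 + z2 →
      (x1 = 0 ∧ y1 = 0 ∧ z1 = 0) ∨ (x2 = 0 ∧ y2 = 0 ∧ z2 = 0)) :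
    IrredIn sigmaE6 (px, py, pz) := by
  rintro ⟨x1, y1, z1⟩ ⟨x2, y2, z2⟩ h1 h2 heq
  rw [mem_sigmaE6_iff] at h1 h2
  simp only [Prod.mk_add_mk, Prod.ext_iff] at heq
  obtain ⟨e1, e2, e3⟩ := heq
  rcases h x1 y1 z1 x2 y2 z2 h1 h2 e1 e2 e3 with ⟨a, b, c⟩ | ⟨a, b, c⟩
  · left; simp [Prod.ext_iff, a, b, c]
  · right; simp [Prod.ext_iff, a, b, c]

theorem E6_weight_vectors_irreducible :
    (toR (1, 1, 1) ∈ sigmaE6 ∧ IrredIn sigmaE6 (1, 1, 1)) ∧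
    (toR (1, 2, 2) ∈ sigmaE6 ∧ IrredIn sigmaE6 (1, 2, 2)) ∧
    (toR (2, 2, 3) ∈ sigmaE6 ∧ IrredIn sigmaE6 (2, 2, 3)) ∧
    (toR (2, 3, 4) ∈ sigmaE6 ∧ IrredIn sigmaE6 (2, 3, 4)) ∧
    (toR (3, 4, 6) ∈ sigmaE6 ∧ IrredIn sigmaE6 (3, 4, 6)) := by
  refine ⟨⟨?_, ?_⟩, ⟨?_, ?_⟩, ⟨?_, ?_⟩, ⟨?_, ?_⟩, ⟨?_, ?_⟩⟩
  · rw [mem_sigmaE6_iff]; omega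
  · exact irred_aux 1 1 1 (by
      intro x1 y1 z1 x2 y2 z2 h1 h2 e1 e2 e3
      obtain ⟨a1, b1, c1⟩ := h1
      obtain ⟨a2, b2, c2⟩ := h2
      have hx1 : 0 ≤ x1 := by omega
      have hx2 : x1 ≤ 1 := by omega
      have hz1 : z1 ≤ 1 := by omega
      interval_cases x1 <;> interval_cases z1 <;> omega)
  · rw [mem_sigmaE6_iff]; omega
  · exact irred_aux 1 2 2 (by
      intro x1 y1 z1 x2 y2 z2 h1 h2 e1 e2 e3
      obtain ⟨a1, b1, c1⟩ := h1
      obtain ⟨a2, b2, c2⟩ := h2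
      have hx1 : 0 ≤ x1 := by omega
      have hx2 : x1 ≤ 1 := by omega
      have hz1 : z1 ≤ 2 := by omega
      interval_cases x1 <;> interval_cases z1 <;> omega)
  · rw [mem_sigmaE6_iff]; omega
  · exact irred_aux 2 2 3 (by
      intro x1 y1 z1 x2 y2 z2 h1 h2 e1 e2 e3
      obtain ⟨a1, b1, c1⟩ := h1
      obtain ⟨a2, b2, c2⟩ := h2
      have hx1 : 0 ≤ x1 := by omega
      have hx2 : x1 ≤ 2 := by omega
      have hz1 : z1 ≤ 3 := by omega
      interval_cases x1 <;> interval_cases z1 <;> omega)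
  · rw [mem_sigmaE6_iff]; omega
  · exact irred_aux 2 3 4 (by
      intro x1 y1 z1 x2 y2 z2 h1 h2 e1 e2 e3
      obtain ⟨a1, b1, c1⟩ := h1
      obtain ⟨a2, b2, c2⟩ := h2
      have hx1 : 0 ≤ x1 := by omega
      have hx2 : x1 ≤ 2 := by omega
      have hz1 : z1 ≤ 4 := by omega
      interval_cases x1 <;> interval_cases z1 <;> omega)
  · rw [mem_sigmaE6_iff]; omega
  · exact irred_aux 3 4 6 (by
      intro x1 y1 z1 x2 y2 z2 h1 h2 e1 e2 e3
      obtain ⟨a1, b1, c1⟩ := h1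
      obtain ⟨a2, b2, c2⟩ := h2
      have hx1 : 0 ≤ x1 := by omega
      have hx2 : x1 ≤ 3 := by omega
      have hz1 : z1 ≤ 6 := by omega
      interval_cases x1 <;> interval_cases z1 <;> omega)
end
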